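/- arXiv:2410.03453 — 2 statements merged into one kernel-verified Lean document; each statement's English description precedes it below -/
import Mathlib

section
/- Let ℓ ≥ 1 and N ≥ 2. Let |ψ⟩ ∈ ℂ^N be a unit vector and |θ⟩ = |ψ⟩^{⊗ℓ}. Let R_sym = I − 2·P_sym be the reflection about the symmetric subspace of (ℂ^N)^{⊗(ℓ+1)}, where P_sym = (1/(ℓ+1)!) Σ_{π∈S_{ℓ+1}} W_π and W_π permutes the ℓ+1 tensor factors according to π. Then (I ⊗ ⟨θ|) R_sym (I ⊗ |θ⟩) = ((ℓ−1)/(ℓ+1))·I − (2ℓ/(ℓ+1))·|ψ⟩⟨ψ|, as an operator on the first ℂ^N factor. -/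
open scoped InnerProductSpace

noncomputable section

/-- The space `(ℂ^N)^{⊗(ℓ+1)}`, realized with index set `Fin (ℓ+1) → Fin N`. -/
abbrev Big (N ℓ : ℕ) := EuclideanSpace ℂ (Fin (ℓ + 1) → Fin N)

abbrev SmallSp (N : ℕ) := EuclideanSpace ℂ (Fin N)

/-- The permutation operator `W_π` on `(ℂ^N)^{⊗(ℓ+1)}`:
`W_π |x₁,…,x_{ℓ+1}⟩ = |x_{π⁻¹(1)},…,x_{π⁻¹(ℓ+1)}⟩`. -/
def Wperm (N ℓ : ℕ) (π : Equiv.Perm (Fin (ℓ + 1))) : Big N ℓ →ₗ[ℂ] Big N ℓ where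
  toFun v := WithLp.toLp 2 (fun y => v (y ∘ π))
  map_add' _ _ := rfl
  map_smul' _ _ := rfl

/-- The projector onto the symmetric subspace, `P_sym = (1/(ℓ+1)!) ∑_π W_π`. -/
def Psym (N ℓ : ℕ) : Big N ℓ →ₗ[ℂ] Big N ℓ :=
  (((ℓ + 1).factorial : ℂ))⁻¹ • ∑ π : Equiv.Perm (Fin (ℓ + 1)), Wperm N ℓ π

/-- The reflection about the symmetric subspace, `R_sym = I − 2 P_sym`. -/
def Rsym (N ℓ : ℕ) : Big N ℓ →ₗ[ℂ] Big N ℓ :=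
  LinearMap.id - (2 : ℂ) • Psym N ℓ

/-- The vector `u ⊗ ψ^{⊗ℓ}` (the first factor is `u`, the remaining `ℓ` are `ψ`). -/
def embWithTheta (N ℓ : ℕ) (ψ u : SmallSp N) : Big N ℓ :=
  WithLp.toLp 2 (fun f => u (f 0) * ∏ i : Fin ℓ, ψ (f i.succ))

def prodVec (N ℓ : ℕ) (a : Fin (ℓ + 1) → SmallSp N) : Big N ℓ :=
  WithLp.toLp 2 (fun f => ∏ j, a j (f j))

lemma emb_eq_prodVec (N ℓ : ℕ) (ψ u : SmallSp N) :
    embWithTheta N ℓ ψ u = prodVec N ℓ (Fin.cons u fun _ => ψ) := by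
  ext f
  simp [embWithTheta, prodVec, Fin.prod_univ_succ]

lemma inner_prodVec (N ℓ : ℕ) (a b : Fin (ℓ + 1) → SmallSp N) :
    ⟪prodVec N ℓ b, prodVec N ℓ a⟫_ℂ = ∏ j, ⟪b j, a j⟫_ℂ := by
  classical
  simp only [PiLp.inner_apply, RCLike.inner_apply, prodVec, PiLp.toLp_apply, map_prod]
  rw [Finset.prod_univ_sum]
  rw [Fintype.piFinset_univ]
  congr 1
  funext f
  rw [← Finset.prod_mul_distrib]

lemma Wperm_prodVec (N ℓ : ℕ) (π : Equiv.Perm (Fin (ℓ + 1))) (a : Fin (ℓ + 1) → SmallSp N) :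
    Wperm N ℓ π (prodVec N ℓ a) = prodVec N ℓ (fun k => a (π.symm k)) := by
  ext y
  show ∏ j, a j (y (π j)) = ∏ k, a (π.symm k) (y k)
  rw [← Equiv.prod_comp π (fun k => a (π.symm k) (y k))]
  simp

/-- `(I ⊗ ⟨θ|) R_sym (I ⊗ |θ⟩) = ((ℓ−1)/(ℓ+1))·I − (2ℓ/(ℓ+1))·|ψ⟩⟨ψ|` with `θ = ψ^{⊗ℓ}`,
expressed via matrix elements: for all `u, w ∈ ℂ^N`,
`⟨w⊗θ| R_sym |u⊗θ⟩ = ((ℓ−1)/(ℓ+1))⟨w,u⟩ − (2ℓ/(ℓ+1))⟨w,ψ⟩⟨ψ,u⟩`. -/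
theorem stmt8 (N ℓ : ℕ) (hℓ : 1 ≤ ℓ) (hN : 2 ≤ N) (ψ : SmallSp N) (hψ : ‖ψ‖ = 1)
    (u w : SmallSp N) :
    ⟪embWithTheta N ℓ ψ w, Rsym N ℓ (embWithTheta N ℓ ψ u)⟫_ℂ =
      (((ℓ : ℂ) - 1) / ((ℓ : ℂ) + 1)) * ⟪w, u⟫_ℂ -
        ((2 * (ℓ : ℂ)) / ((ℓ : ℂ) + 1)) * (⟪w, ψ⟫_ℂ * ⟪ψ, u⟫_ℂ) := by
  classical
  have hpsi1 : ⟪ψ, ψ⟫_ℂ = 1 := by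
    rw [inner_self_eq_norm_sq_to_K, hψ]; norm_num
  set A := ⟪w, u⟫_ℂ with hA
  set B := ⟪w, ψ⟫_ℂ * ⟪ψ, u⟫_ℂ with hB
  set a : Fin (ℓ + 1) → SmallSp N := Fin.cons u fun _ => ψ with ha
  set b : Fin (ℓ + 1) → SmallSp N := Fin.cons w fun _ => ψ with hb
  -- matrix element of a single permutation
  have key : ∀ π : Equiv.Perm (Fin (ℓ + 1)),
      ⟪prodVec N ℓ b, Wperm N ℓ π (prodVec N ℓ a)⟫_ℂ = if π 0 = 0 then A else B := by
    intro π
    rw [Wperm_prodVec, inner_prodVec]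
    by_cases h0 : π 0 = 0
    · have hsymm : π.symm 0 = 0 := by
        rw [Equiv.symm_apply_eq, h0]
      rw [if_pos h0]
      rw [Fintype.prod_eq_single 0]
      · rw [hsymm]
        simp only [hb, ha, Fin.cons_zero]
        rfl
      · intro k hk
        have hsk : π.symm k ≠ 0 := fun hc =>
          hk (by rw [← π.apply_symm_apply k, hc, h0])
        obtain ⟨i, hi⟩ := Fin.exists_succ_eq.mpr hk
        obtain ⟨j, hj⟩ := Fin.exists_succ_eq.mpr hsk
        rw [← hj, ← hi]
        simp only [hb, ha, Fin.cons_succ]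
        exact hpsi1
    · rw [if_neg h0]
      have hs0 : π.symm 0 ≠ 0 := fun hc => h0 (by simpa using (congrArg π hc).symm)
      rw [Fintype.prod_eq_mul 0 (π 0) (Ne.symm h0)]
      · rw [Equiv.symm_apply_apply]
        obtain ⟨i, hi⟩ := Fin.exists_succ_eq.mpr hs0
        obtain ⟨m, hm⟩ := Fin.exists_succ_eq.mpr h0
        rw [← hi, ← hm]
        simp only [hb, ha, Fin.cons_zero, Fin.cons_succ]
        rfl
      · rintro x ⟨hx0, hxp⟩
        have hsx : π.symm x ≠ 0 := fun hc => hxp (by simpa using congrArg π hc)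
        obtain ⟨i, hi⟩ := Fin.exists_succ_eq.mpr hx0
        obtain ⟨j, hj⟩ := Fin.exists_succ_eq.mpr hsx
        rw [← hj, ← hi]
        simp only [hb, ha, Fin.cons_succ]
        exact hpsi1
  -- sum over permutations
  have hsum : ∑ π : Equiv.Perm (Fin (ℓ + 1)),
      ⟪prodVec N ℓ b, Wperm N ℓ π (prodVec N ℓ a)⟫_ℂ
      = (ℓ.factorial : ℂ) * A + (ℓ : ℂ) * (ℓ.factorial : ℂ) * B := by
    simp only [key]
    rw [← Fintype.sum_equiv Equiv.Perm.decomposeFin.symm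
      (fun pe : Fin (ℓ + 1) × Equiv.Perm (Fin ℓ) => if pe.1 = 0 then A else B)
      (fun π => if π 0 = 0 then A else B)
      (fun pe => by
        rcases pe with ⟨p, e⟩
        simp only [Equiv.Perm.decomposeFin_symm_apply_zero])]
    rw [Fintype.sum_prod_type, Fin.sum_univ_succ]
    simp only [eq_self_iff_true, if_true, Fin.succ_ne_zero, if_false, ite_true, ite_false,
      Finset.sum_const, Finset.card_univ, Fintype.card_perm, Fintype.card_fin, nsmul_eq_mul]
    push_cast
    ring
  -- put it together
  rw [emb_eq_prodVec, emb_eq_prodVec, ← ha, ← hb, Rsym, Psym]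
  simp only [LinearMap.sub_apply, LinearMap.id_apply, LinearMap.smul_apply,
    inner_sub_right, inner_smul_right, LinearMap.sum_apply, inner_sum, hsum]
  rw [inner_prodVec]
  have hprod : ∏ j, ⟪b j, a j⟫_ℂ = A := by
    rw [Fin.prod_univ_succ]
    simp only [hb, ha, Fin.cons_zero, Fin.cons_succ, hpsi1, Finset.prod_const_one, mul_one]
    rfl
  rw [hprod]
  have hfact : ((ℓ + 1).factorial : ℂ) = ((ℓ : ℂ) + 1) * (ℓ.factorial : ℂ) := by
    rw [Nat.factorial_succ]; push_cast; ring
  have h1 : ((ℓ : ℂ) + 1) ≠ 0 := by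
    have h : ((ℓ + 1 : ℕ) : ℂ) ≠ 0 := Nat.cast_ne_zero.mpr ℓ.succ_ne_zero
    push_cast at h; exact h
  have h2 : (ℓ.factorial : ℂ) ≠ 0 := Nat.cast_ne_zero.mpr ℓ.factorial_ne_zero
  rw [hfact]
  field_simp
  ring

end
end

section
/- With the setup above (unit vectors |ψ⟩ ∈ ℂ^N, |φ⟩ ∈ ℂ^N, |θ⟩ = |ψ⟩^{⊗ℓ}, R_ψ = I − 2|ψ⟩⟨ψ|, R_sym the reflection about the symmetric subspace of (ℂ^N)^{⊗(ℓ+1)}), define |Ψ_A⟩ = (R_ψ|φ⟩) ⊗ |θ⟩ and |Ψ_B⟩ = R_sym(|φ⟩ ⊗ |θ⟩). Then ⟨Ψ_A|Ψ_B⟩ = (ℓ−1)/(ℓ+1) + (2/(ℓ+1))·|⟨ψ|φ⟩|². In particular ⟨Ψ_A|Ψ_B⟩ is real and ⟨Ψ_A|Ψ_B⟩ ≥ 1 − 2/(ℓ+1). -/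
open scoped InnerProductSpace

noncomputable section

section Aux

variable {N ℓ : ℕ}

lemma small_inner (u v : SmallSp N) :
    ⟪u, v⟫_ℂ = ∑ x, (starRingEnd ℂ) (u x) * v x := by
  simp [PiLp.inner_apply, RCLike.inner_apply, mul_comm]

lemma big_inner (v w : Big N ℓ) :
    ⟪v, w⟫_ℂ = ∑ f : Fin (ℓ + 1) → Fin N, (starRingEnd ℂ) (v f) * w f := by
  simp [PiLp.inner_apply, RCLike.inner_apply, mul_comm]

lemma inner_perm (ψ u φ : SmallSp N) (hψ1 : ⟪ψ, ψ⟫_ℂ = 1) (π : Equiv.Perm (Fin (ℓ + 1))) :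
    ⟪embWithTheta N ℓ ψ u, Wperm N ℓ π (embWithTheta N ℓ ψ φ)⟫_ℂ =
      if π 0 = 0 then ⟪u, φ⟫_ℂ else ⟪u, ψ⟫_ℂ * ⟪ψ, φ⟫_ℂ := by
  classical
  have hψs : (∑ x, (starRingEnd ℂ) (ψ x) * ψ x) = 1 := by rw [← small_inner]; exact hψ1
  set g : Fin (ℓ + 1) → Fin N → ℂ := fun i x =>
    (if i = 0 then (starRingEnd ℂ) (u x) else (starRingEnd ℂ) (ψ x)) *
    (if i = π 0 then φ x else ψ x) with hg
  have hsum : ∀ f : Fin (ℓ + 1) → Fin N,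
      (starRingEnd ℂ) (embWithTheta N ℓ ψ u f) * (Wperm N ℓ π (embWithTheta N ℓ ψ φ) f)
        = ∏ i, g i (f i) := by
    intro f
    have h1 : ∏ i, g i (f i) =
        (∏ i, (if i = 0 then (starRingEnd ℂ) (u (f i)) else (starRingEnd ℂ) (ψ (f i)))) *
        (∏ i, (if i = π 0 then φ (f i) else ψ (f i))) := by
      rw [← Finset.prod_mul_distrib]
    have h2 : (∏ i, (if i = 0 then (starRingEnd ℂ) (u (f i)) else (starRingEnd ℂ) (ψ (f i))))
        = (starRingEnd ℂ) (u (f 0)) * ∏ j : Fin ℓ, (starRingEnd ℂ) (ψ (f j.succ)) := by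
      rw [Fin.prod_univ_succ]
      simp [Fin.succ_ne_zero]
    have h3 : (∏ i, (if i = π 0 then φ (f i) else ψ (f i)))
        = φ (f (π 0)) * ∏ j : Fin ℓ, ψ (f (π j.succ)) := by
      rw [← Equiv.prod_comp π (fun i => if i = π 0 then φ (f i) else ψ (f i)),
        Fin.prod_univ_succ]
      simp [π.injective.eq_iff, Fin.succ_ne_zero]
    rw [h1, h2, h3]
    simp only [embWithTheta, Wperm, LinearMap.coe_mk, AddHom.coe_mk, Function.comp_apply,
      map_mul, map_prod, WithLp.ofLp_toLp]
    show _ * (φ (f (π 0)) * ∏ x : Fin ℓ, ψ (f (π x.succ))) = _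
    try ring
  rw [big_inner]
  simp only [hsum]
  rw [← Fintype.piFinset_univ, ← Finset.prod_univ_sum]
  by_cases h : π 0 = 0
  · rw [if_pos h, Fin.prod_univ_succ]
    have hfirst : (∑ x, g 0 x) = ⟪u, φ⟫_ℂ := by
      simp [hg, h, small_inner]
    have hrest : ∀ j : Fin ℓ, (∑ x, g j.succ x) = 1 := by
      intro j
      have hne : (j.succ : Fin (ℓ+1)) ≠ π 0 := by rw [h]; exact Fin.succ_ne_zero j
      simp [hg, Fin.succ_ne_zero, hne, hψs]
    rw [hfirst, Finset.prod_congr rfl (fun j _ => hrest j)]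
    simp
  · rw [if_neg h, Fin.prod_univ_succ]
    have h0 : (0 : Fin (ℓ+1)) ≠ π 0 := fun hh => h hh.symm
    have hfirst : (∑ x, g 0 x) = ⟪u, ψ⟫_ℂ := by
      simp [hg, h0, small_inner]
    have hrest : (∏ j : Fin ℓ, ∑ x, g j.succ x) = ⟪ψ, φ⟫_ℂ := by
      have hpred : ((π 0).pred h).succ = π 0 := Fin.succ_pred _ h
      rw [Finset.prod_eq_single ((π 0).pred h)]
      · simp [hg, Fin.succ_ne_zero, hpred, h, small_inner]
      · intro j _ hj
        have hne : (j.succ : Fin (ℓ+1)) ≠ π 0 := by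
          intro hh
          exact hj (by rw [← hpred] at hh; exact Fin.succ_injective _ hh)
        simp [hg, Fin.succ_ne_zero, hne, hψs]
      · intro hmem; exact absurd (Finset.mem_univ _) hmem
    rw [hfirst, hrest]

lemma sum_perm_eq (F : Fin (ℓ + 1) → ℂ) :
    ∑ π : Equiv.Perm (Fin (ℓ + 1)), F (π 0) = (ℓ.factorial : ℂ) * ∑ p, F p := by
  rw [← Equiv.sum_comp (Equiv.Perm.decomposeFin (n := ℓ)).symm (fun π => F (π 0))]
  rw [Fintype.sum_prod_type]
  have h1 : ∀ p : Fin (ℓ + 1),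
      (∑ _e : Equiv.Perm (Fin ℓ), F ((Equiv.Perm.decomposeFin.symm (p, _e)) 0))
        = (ℓ.factorial : ℂ) * F p := by
    intro p
    simp [Equiv.Perm.decomposeFin_symm_apply_zero, Finset.sum_const, Finset.card_univ,
      Fintype.card_perm, Fintype.card_fin, nsmul_eq_mul]
  rw [Finset.sum_congr rfl (fun p _ => h1 p), ← Finset.mul_sum]

end Aux

section Main

variable {N ℓ : ℕ}

set_option maxHeartbeats 2000000 in
lemma final_inner (ψ φ : SmallSp N) (hψ1 : ⟪ψ, ψ⟫_ℂ = 1) (hφ1 : ⟪φ, φ⟫_ℂ = 1) :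
    ⟪embWithTheta N ℓ ψ (φ - (2 : ℂ) • (⟪ψ, φ⟫_ℂ • ψ)),
      Rsym N ℓ (embWithTheta N ℓ ψ φ)⟫_ℂ =
      (((((ℓ : ℝ) - 1) / ((ℓ : ℝ) + 1)) + (2 / ((ℓ : ℝ) + 1)) * ‖⟪ψ, φ⟫_ℂ‖ ^ 2 : ℝ) : ℂ) := by
  classical
  set c : ℂ := ⟪ψ, φ⟫_ℂ with hc
  set u : SmallSp N := φ - (2 : ℂ) • (c • ψ) with hu
  have hcc : (starRingEnd ℂ) c * c = ((‖c‖ ^ 2 : ℝ) : ℂ) := by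
    rw [RCLike.conj_mul]; norm_cast
  have hA : ⟪u, φ⟫_ℂ = 1 - 2 * ((‖c‖ ^ 2 : ℝ) : ℂ) := by
    rw [hu, inner_sub_left, inner_smul_left, inner_smul_left, hφ1, ← hc]
    rw [map_ofNat, hcc]
  have hB : ⟪u, ψ⟫_ℂ = -((starRingEnd ℂ) c) := by
    rw [hu, inner_sub_left, inner_smul_left, inner_smul_left, hψ1, map_ofNat]
    rw [show ⟪φ, ψ⟫_ℂ = (starRingEnd ℂ) c from by rw [hc, inner_conj_symm]]
    ring
  have hBc : ⟪u, ψ⟫_ℂ * ⟪ψ, φ⟫_ℂ = -((‖c‖ ^ 2 : ℝ) : ℂ) := by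
    rw [hB, ← hc, neg_mul, hcc]
  have hid : Wperm N ℓ 1 (embWithTheta N ℓ ψ φ) = embWithTheta N ℓ ψ φ := by
    ext f
    simp [Wperm]
  have hA' : ⟪embWithTheta N ℓ ψ u, embWithTheta N ℓ ψ φ⟫_ℂ = ⟪u, φ⟫_ℂ := by
    have := inner_perm (ℓ := ℓ) ψ u φ hψ1 1
    rw [hid] at this
    simpa using this
  have hΨB : ⟪embWithTheta N ℓ ψ u, Rsym N ℓ (embWithTheta N ℓ ψ φ)⟫_ℂ
      = ⟪u, φ⟫_ℂ - 2 * ((((ℓ + 1).factorial : ℂ))⁻¹ *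
      ∑ π : Equiv.Perm (Fin (ℓ + 1)),
        ⟪embWithTheta N ℓ ψ u, Wperm N ℓ π (embWithTheta N ℓ ψ φ)⟫_ℂ) := by
    rw [Rsym, Psym]
    simp only [LinearMap.sub_apply, LinearMap.id_apply, LinearMap.smul_apply,
      LinearMap.sum_apply, inner_sub_right, inner_smul_right, inner_sum, hA']
    try ring_nf
  have hsum : ∑ π : Equiv.Perm (Fin (ℓ + 1)),
        ⟪embWithTheta N ℓ ψ u, Wperm N ℓ π (embWithTheta N ℓ ψ φ)⟫_ℂ
      = (ℓ.factorial : ℂ) * (⟪u, φ⟫_ℂ + (ℓ : ℂ) * (⟪u, ψ⟫_ℂ * ⟪ψ, φ⟫_ℂ)) := by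
    calc ∑ π : Equiv.Perm (Fin (ℓ + 1)),
          ⟪embWithTheta N ℓ ψ u, Wperm N ℓ π (embWithTheta N ℓ ψ φ)⟫_ℂ
        = ∑ π : Equiv.Perm (Fin (ℓ + 1)),
            (fun p : Fin (ℓ + 1) => if p = 0 then ⟪u, φ⟫_ℂ else ⟪u, ψ⟫_ℂ * ⟪ψ, φ⟫_ℂ) (π 0) :=
          Finset.sum_congr rfl (fun π _ => inner_perm ψ u φ hψ1 π)
      _ = (ℓ.factorial : ℂ) * ∑ p : Fin (ℓ + 1),
            (fun p : Fin (ℓ + 1) => if p = 0 then ⟪u, φ⟫_ℂ else ⟪u, ψ⟫_ℂ * ⟪ψ, φ⟫_ℂ) p :=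
          sum_perm_eq (ℓ := ℓ)
            (fun p : Fin (ℓ + 1) => if p = 0 then ⟪u, φ⟫_ℂ else ⟪u, ψ⟫_ℂ * ⟪ψ, φ⟫_ℂ)
      _ = (ℓ.factorial : ℂ) * (⟪u, φ⟫_ℂ + (ℓ : ℂ) * (⟪u, ψ⟫_ℂ * ⟪ψ, φ⟫_ℂ)) := by
          congr 1
          rw [Fin.sum_univ_succ]
          simp [Fin.succ_ne_zero, Finset.sum_const, mul_comm]
  have hfac : ((ℓ + 1).factorial : ℂ) = ((ℓ : ℂ) + 1) * (ℓ.factorial : ℂ) := by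
    rw [Nat.factorial_succ]; push_cast; ring
  have hℓ1 : ((ℓ : ℂ) + 1) ≠ 0 := by
    have h := (Nat.cast_ne_zero (R := ℂ)).mpr (Nat.succ_ne_zero ℓ)
    push_cast at h
    exact h
  have hfacne : (ℓ.factorial : ℂ) ≠ 0 := Nat.cast_ne_zero.mpr (Nat.factorial_ne_zero ℓ)
  rw [hΨB, hsum, hA, hBc, hfac]
  push_cast
  field_simp
  ring

end Main

/-- With `|Ψ_A⟩ = (R_ψ|φ⟩) ⊗ ψ^{⊗ℓ}` and `|Ψ_B⟩ = R_sym(|φ⟩ ⊗ ψ^{⊗ℓ})` we have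
`⟨Ψ_A|Ψ_B⟩ = (ℓ−1)/(ℓ+1) + (2/(ℓ+1))|⟨ψ|φ⟩|²`; in particular it is real and
at least `1 − 2/(ℓ+1)`. -/
theorem stmt9 (N ℓ : ℕ) (hℓ : 1 ≤ ℓ) (hN : 2 ≤ N) (ψ φ : SmallSp N)
    (hψ : ‖ψ‖ = 1) (hφ : ‖φ‖ = 1) :
    let ΨA : Big N ℓ := embWithTheta N ℓ ψ (φ - (2 : ℂ) • (⟪ψ, φ⟫_ℂ • ψ))
    let ΨB : Big N ℓ := Rsym N ℓ (embWithTheta N ℓ ψ φ)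
    ⟪ΨA, ΨB⟫_ℂ =
      (((((ℓ : ℝ) - 1) / ((ℓ : ℝ) + 1)) + (2 / ((ℓ : ℝ) + 1)) * ‖⟪ψ, φ⟫_ℂ‖ ^ 2 : ℝ) : ℂ) ∧
    (⟪ΨA, ΨB⟫_ℂ).im = 0 ∧
    1 - 2 / ((ℓ : ℝ) + 1) ≤ (⟪ΨA, ΨB⟫_ℂ).re := by
  intro ΨA ΨB
  have hψ1 : ⟪ψ, ψ⟫_ℂ = 1 := by
    rw [inner_self_eq_norm_sq_to_K, hψ]; norm_num
  have hφ1 : ⟪φ, φ⟫_ℂ = 1 := by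
    rw [inner_self_eq_norm_sq_to_K, hφ]; norm_num
  have key : ⟪ΨA, ΨB⟫_ℂ =
      (((((ℓ : ℝ) - 1) / ((ℓ : ℝ) + 1)) + (2 / ((ℓ : ℝ) + 1)) * ‖⟪ψ, φ⟫_ℂ‖ ^ 2 : ℝ) : ℂ) :=
    final_inner ψ φ hψ1 hφ1
  refine ⟨key, ?_, ?_⟩
  · rw [key, Complex.ofReal_im]
  · rw [key, Complex.ofReal_re]
    have h1 : 1 - 2 / ((ℓ : ℝ) + 1) = ((ℓ : ℝ) - 1) / ((ℓ : ℝ) + 1) := by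
      have : ((ℓ : ℝ) + 1) ≠ 0 := by positivity
      field_simp
      ring
    have h2 : 0 ≤ (2 / ((ℓ : ℝ) + 1)) * ‖⟪ψ, φ⟫_ℂ‖ ^ 2 := by positivity
    linarith

end
end
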